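/- Let A₁, A₂, B₁, B₂ be Hermitian operators with square equal to the identity on finite-dimensional Hilbert spaces H_A, H_B, and ρ a state on H_A ⊗ H_B. Then the CHSH value satisfies tr(ρ𝓑) ≤ 2√(2 − |tr(ρ·(1 ⊗ (i/2)[B₁,B₂]))|²). -/

import Mathlib

/-!
With `C_A = (i/2)[A₁,A₂]` and `C_B = (i/2)[B₁,B₂]`, Landau's identity reads
`𝓑² = 4 (1 + C_A ⊗ C_B)`. For Hermitian involutions `1 - C_A² = (½{A₁,A₂})² ≥ 0`, and
likewise for `C_B`, so `-1 ≤ C_A, C_B ≤ 1`, hence `C_A ⊗ C_B ≤ 1` and `𝓑² ≤ 8`. Moreover `𝓑` anticommutes with `Ĉ = 1 ⊗ C_B`, so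
`(s𝓑 + tĈ)² = s²𝓑² + t²Ĉ² ≤ 8s² + t²` for real `s, t`. Since `⟨X⟩² ≤ ⟨X²⟩` in any state,
`(s⟨𝓑⟩ + t⟨Ĉ⟩)² ≤ 8s² + t²`, and the best choice of `(s, t)` gives `⟨𝓑⟩² + 8⟨Ĉ⟩² ≤ 8`.
-/

open Matrix Kronecker ComplexOrder
open scoped MatrixOrder

section Involutions

variable {R : Type*} [Ring R] {P Q : R}

theorem add_mul_self_add_sub_mul_self (hP : P * P = 1) (hQ : Q * Q = 1) :
    (P + Q) * (P + Q) + (P - Q) * (P - Q) = 4 := by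
  have h : (P + Q) * (P + Q) + (P - Q) * (P - Q) = 2 * (P * P) + 2 * (Q * Q) := by noncomm_ring
  rw [h, hP, hQ]
  norm_num

theorem add_mul_sub_eq_neg_lie (hP : P * P = 1) (hQ : Q * Q = 1) :
    (P + Q) * (P - Q) = -⁅P, Q⁆ := by
  have h : (P + Q) * (P - Q) = P * P - Q * Q - (P * Q - Q * P) := by noncomm_ring
  rw [h, hP, hQ, Ring.lie_def]
  abel

theorem sub_mul_add_eq_lie (hP : P * P = 1) (hQ : Q * Q = 1) :
    (P - Q) * (P + Q) = ⁅P, Q⁆ := by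
  have h : (P - Q) * (P + Q) = P * P - Q * Q + (P * Q - Q * P) := by noncomm_ring
  rw [h, hP, hQ, Ring.lie_def]
  abel

theorem mul_lie_add_lie_mul_left (hP : P * P = 1) : P * ⁅P, Q⁆ + ⁅P, Q⁆ * P = 0 := by
  have h : P * ⁅P, Q⁆ + ⁅P, Q⁆ * P = P * P * Q - Q * (P * P) := by rw [Ring.lie_def]; noncomm_ring
  rw [h, hP, one_mul, mul_one, sub_self]

theorem mul_lie_add_lie_mul_right (hQ : Q * Q = 1) : Q * ⁅P, Q⁆ + ⁅P, Q⁆ * Q = 0 := by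
  have h : Q * ⁅P, Q⁆ + ⁅P, Q⁆ * Q = P * (Q * Q) - Q * Q * P := by rw [Ring.lie_def]; noncomm_ring
  rw [h, hQ, one_mul, mul_one, sub_self]

theorem add_mul_lie_add_lie_mul_add (hP : P * P = 1) (hQ : Q * Q = 1) :
    (P + Q) * ⁅P, Q⁆ + ⁅P, Q⁆ * (P + Q) = 0 := by
  rw [add_mul, mul_add, add_add_add_comm, mul_lie_add_lie_mul_left hP,
    mul_lie_add_lie_mul_right hQ, add_zero]

theorem sub_mul_lie_add_lie_mul_sub (hP : P * P = 1) (hQ : Q * Q = 1) :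
    (P - Q) * ⁅P, Q⁆ + ⁅P, Q⁆ * (P - Q) = 0 := by
  rw [sub_mul, mul_sub, sub_add_sub_comm, mul_lie_add_lie_mul_left hP,
    mul_lie_add_lie_mul_right hQ, sub_zero]

theorem anticommutator_mul_self (hP : P * P = 1) (hQ : Q * Q = 1) :
    (P * Q + Q * P) * (P * Q + Q * P) = ⁅P, Q⁆ * ⁅P, Q⁆ + 4 := by
  have h : (P * Q + Q * P) * (P * Q + Q * P) - ⁅P, Q⁆ * ⁅P, Q⁆ =
      2 * (P * (Q * Q) * P) + 2 * (Q * (P * P) * Q) := by rw [Ring.lie_def]; noncomm_ring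
  rw [hP, hQ, mul_one, mul_one, hP, hQ] at h
  rw [← sub_eq_iff_eq_add', h]
  norm_num

end Involutions

section Kronecker

variable {R ι κ : Type*} [CommRing R]

theorem Matrix.kronecker_sub (A : Matrix ι ι R) (B C : Matrix κ κ R) :
    A ⊗ₖ (B - C) = A ⊗ₖ B - A ⊗ₖ C := by
  ext; simp [mul_sub]

theorem Matrix.kronecker_neg (A : Matrix ι ι R) (B : Matrix κ κ R) : A ⊗ₖ (-B) = -(A ⊗ₖ B) := by
  ext; simp

theorem Matrix.sub_kronecker (A B : Matrix ι ι R) (C : Matrix κ κ R) :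
    (A - B) ⊗ₖ C = A ⊗ₖ C - B ⊗ₖ C := by
  ext; simp [sub_mul]

theorem Matrix.IsHermitian.kronecker [StarRing R] {A : Matrix ι ι R} {B : Matrix κ κ R}
    (hA : A.IsHermitian) (hB : B.IsHermitian) : (A ⊗ₖ B).IsHermitian := by
  rw [IsHermitian, conjTranspose_kronecker, hA.eq, hB.eq]

def chshOperator (A₁ A₂ : Matrix ι ι R) (B₁ B₂ : Matrix κ κ R) : Matrix (ι × κ) (ι × κ) R :=
  A₁ ⊗ₖ (B₁ + B₂) + A₂ ⊗ₖ (B₁ - B₂)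

variable {A₁ A₂ : Matrix ι ι R} {B₁ B₂ : Matrix κ κ R}

theorem Matrix.IsHermitian.chshOperator [StarRing R] (hA₁ : A₁.IsHermitian)
    (hA₂ : A₂.IsHermitian) (hB₁ : B₁.IsHermitian) (hB₂ : B₂.IsHermitian) :
    (chshOperator A₁ A₂ B₁ B₂).IsHermitian :=
  (hA₁.kronecker (hB₁.add hB₂)).add (hA₂.kronecker (hB₁.sub hB₂))

variable [Fintype ι] [DecidableEq ι] [Fintype κ] [DecidableEq κ]

theorem chshOperator_mul_self (hA₁ : A₁ * A₁ = 1) (hA₂ : A₂ * A₂ = 1)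
    (hB₁ : B₁ * B₁ = 1) (hB₂ : B₂ * B₂ = 1) :
    chshOperator A₁ A₂ B₁ B₂ * chshOperator A₁ A₂ B₁ B₂ = 4 - ⁅A₁, A₂⁆ ⊗ₖ ⁅B₁, B₂⁆ := by
  have expand : chshOperator A₁ A₂ B₁ B₂ * chshOperator A₁ A₂ B₁ B₂ =
      (A₁ * A₁) ⊗ₖ ((B₁ + B₂) * (B₁ + B₂)) + (A₂ * A₂) ⊗ₖ ((B₁ - B₂) * (B₁ - B₂)) +
        ((A₁ * A₂) ⊗ₖ ((B₁ + B₂) * (B₁ - B₂)) + (A₂ * A₁) ⊗ₖ ((B₁ - B₂) * (B₁ + B₂))) := by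
    simp only [chshOperator, add_mul, mul_add, ← mul_kronecker_mul]
    abel
  rw [expand, hA₁, hA₂, ← kronecker_add, add_mul_self_add_sub_mul_self hB₁ hB₂,
    add_mul_sub_eq_neg_lie hB₁ hB₂, sub_mul_add_eq_lie hB₁ hB₂, Ring.lie_def A₁, sub_kronecker,
    kronecker_neg]
  have h4 : (1 : Matrix ι ι R) ⊗ₖ (4 : Matrix κ κ R) = 4 := by
    simpa using natCast_kronecker_natCast (α := R) (m := ι) (n := κ) 1 4
  rw [h4]
  abel

theorem chshOperator_anticomm (hB₁ : B₁ * B₁ = 1) (hB₂ : B₂ * B₂ = 1) :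
    chshOperator A₁ A₂ B₁ B₂ * ((1 : Matrix ι ι R) ⊗ₖ ⁅B₁, B₂⁆) +
      ((1 : Matrix ι ι R) ⊗ₖ ⁅B₁, B₂⁆) * chshOperator A₁ A₂ B₁ B₂ = 0 := by
  have expand : chshOperator A₁ A₂ B₁ B₂ * ((1 : Matrix ι ι R) ⊗ₖ ⁅B₁, B₂⁆) +
      ((1 : Matrix ι ι R) ⊗ₖ ⁅B₁, B₂⁆) * chshOperator A₁ A₂ B₁ B₂ =
        A₁ ⊗ₖ ((B₁ + B₂) * ⁅B₁, B₂⁆ + ⁅B₁, B₂⁆ * (B₁ + B₂)) +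
          A₂ ⊗ₖ ((B₁ - B₂) * ⁅B₁, B₂⁆ + ⁅B₁, B₂⁆ * (B₁ - B₂)) := by
    simp only [chshOperator, add_mul, mul_add, ← mul_kronecker_mul, mul_one, one_mul,
      kronecker_add]
    abel
  rw [expand, add_mul_lie_add_lie_mul_add hB₁ hB₂, sub_mul_lie_add_lie_mul_sub hB₁ hB₂,
    kronecker_zero, kronecker_zero, add_zero]

end Kronecker

section LoewnerOrder

variable {𝕜 ι κ : Type*} [RCLike 𝕜] [Fintype ι] [DecidableEq ι] [Fintype κ] [DecidableEq κ]
  {C : Matrix ι ι 𝕜}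

theorem Matrix.IsHermitian.le_one_of_mul_self_le_one (hC : C.IsHermitian) (h : C * C ≤ 1) :
    C ≤ 1 := by
  have key : 1 - C = (2⁻¹ : ℝ) • ((1 - C) * (1 - C) + (1 - C * C)) := by
    have h2 : (1 - C) * (1 - C) + (1 - C * C) = (2 : ℝ) • (1 - C) := by
      rw [two_smul]; noncomm_ring
    rw [h2, smul_smul]
    norm_num
  rw [← sub_nonneg, key]
  exact smul_nonneg (by norm_num)
    (add_nonneg ((isHermitian_one.sub hC).isSelfAdjoint.mul_self_nonneg) (sub_nonneg.mpr h))

theorem Matrix.IsHermitian.neg_one_le_of_mul_self_le_one (hC : C.IsHermitian) (h : C * C ≤ 1) :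
    -1 ≤ C :=
  neg_le.mp (hC.neg.le_one_of_mul_self_le_one (by rwa [neg_mul_neg]))

theorem Matrix.IsHermitian.kronecker_le_one {D : Matrix κ κ 𝕜} (hC : C.IsHermitian)
    (hD : D.IsHermitian) (hC1 : C * C ≤ 1) (hD1 : D * D ≤ 1) : C ⊗ₖ D ≤ 1 := by
  have key : 1 - C ⊗ₖ D = (2⁻¹ : ℝ) • ((1 - C) ⊗ₖ (1 + D) + (1 + C) ⊗ₖ (1 - D)) := by
    have h2 : (1 - C) ⊗ₖ (1 + D) + (1 + C) ⊗ₖ (1 - D) = (2 : ℝ) • (1 - C ⊗ₖ D) := by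
      simp only [sub_kronecker, add_kronecker, kronecker_sub, kronecker_add, one_kronecker_one,
        two_smul]
      abel
    rw [h2, smul_smul]
    norm_num
  have hCp := sub_nonneg.mpr (hC.le_one_of_mul_self_le_one hC1)
  have hCm := neg_le_iff_add_nonneg'.mp (hC.neg_one_le_of_mul_self_le_one hC1)
  have hDp := sub_nonneg.mpr (hD.le_one_of_mul_self_le_one hD1)
  have hDm := neg_le_iff_add_nonneg'.mp (hD.neg_one_le_of_mul_self_le_one hD1)
  rw [← sub_nonneg, key]
  exact smul_nonneg (by norm_num) (add_nonneg (hCp.posSemidef.kronecker hDm.posSemidef).nonneg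
    (hCm.posSemidef.kronecker hDp.posSemidef).nonneg)

theorem Matrix.one_kronecker_mul_self_le_one (hC1 : C * C ≤ 1) :
    ((1 : Matrix κ κ 𝕜) ⊗ₖ C) * ((1 : Matrix κ κ 𝕜) ⊗ₖ C) ≤ 1 := by
  rw [← mul_kronecker_mul, one_mul, ← sub_nonneg, ← one_kronecker_one, ← kronecker_sub]
  exact (PosSemidef.one.kronecker (sub_nonneg.mpr hC1).posSemidef).nonneg

end LoewnerOrder

section Observables

variable {ι : Type*} [Fintype ι]

noncomputable def commutatorObservable (P Q : Matrix ι ι ℂ) : Matrix ι ι ℂ :=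
  (Complex.I / 2) • ⁅P, Q⁆

variable {P Q : Matrix ι ι ℂ}

theorem Matrix.IsHermitian.commutatorObservable (hP : P.IsHermitian) (hQ : Q.IsHermitian) :
    (commutatorObservable P Q).IsHermitian := by
  have hstar : star (Complex.I / 2) = -(Complex.I / 2) := by simp [neg_div]
  rw [IsHermitian, _root_.commutatorObservable, conjTranspose_smul, Ring.lie_def,
    conjTranspose_sub, conjTranspose_mul, conjTranspose_mul, hP.eq, hQ.eq, hstar, neg_smul,
    ← smul_neg, neg_sub]

theorem commutatorObservable_mul_self_le_one [DecidableEq ι] (hP : P.IsHermitian)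
    (hQ : Q.IsHermitian) (hP1 : P * P = 1) (hQ1 : Q * Q = 1) :
    commutatorObservable P Q * commutatorObservable P Q ≤ 1 := by
  have hS : IsSelfAdjoint ((2⁻¹ : ℝ) • (P * Q + Q * P)) := by
    refine (IsSelfAdjoint.all _).smul ?_
    rw [IsSelfAdjoint, star_add, star_mul, star_mul, hP.star_eq, hQ.star_eq, add_comm]
  have key : 1 - commutatorObservable P Q * commutatorObservable P Q =
      (2⁻¹ : ℝ) • (P * Q + Q * P) * (2⁻¹ : ℝ) • (P * Q + Q * P) := by
    rw [commutatorObservable, smul_mul_smul_comm, smul_mul_smul_comm,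
      anticommutator_mul_self hP1 hQ1, show (4 : Matrix ι ι ℂ) = (4 : ℂ) • 1 by
        simp [ofNat_smul_eq_nsmul]]
    match_scalars
    · norm_num
    · ring_nf
      norm_num
  rw [← sub_nonneg, key]
  exact hS.mul_self_nonneg

end Observables

section CHSH

variable {ι κ : Type*} [Fintype ι] [DecidableEq ι] [Fintype κ] [DecidableEq κ]
  {A₁ A₂ : Matrix ι ι ℂ} {B₁ B₂ : Matrix κ κ ℂ}

theorem chshOperator_mul_self_le_eight (hA₁ : A₁.IsHermitian) (hA₂ : A₂.IsHermitian)
    (hB₁ : B₁.IsHermitian) (hB₂ : B₂.IsHermitian) (hA₁u : A₁ * A₁ = 1) (hA₂u : A₂ * A₂ = 1)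
    (hB₁u : B₁ * B₁ = 1) (hB₂u : B₂ * B₂ = 1) :
    chshOperator A₁ A₂ B₁ B₂ * chshOperator A₁ A₂ B₁ B₂ ≤ 8 := by
  have key : 8 - chshOperator A₁ A₂ B₁ B₂ * chshOperator A₁ A₂ B₁ B₂ =
      (4 : ℝ) • (1 - commutatorObservable A₁ A₂ ⊗ₖ commutatorObservable B₁ B₂) := by
    rw [chshOperator_mul_self hA₁u hA₂u hB₁u hB₂u, commutatorObservable, commutatorObservable,
      smul_kronecker, kronecker_smul, smul_smul,
      show (8 : Matrix (ι × κ) (ι × κ) ℂ) = (8 : ℂ) • 1 by simp [ofNat_smul_eq_nsmul],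
      show (4 : Matrix (ι × κ) (ι × κ) ℂ) = (4 : ℂ) • 1 by simp [ofNat_smul_eq_nsmul]]
    match_scalars
    · norm_num
    · ring_nf
      norm_num
  rw [← sub_nonneg, key]
  exact smul_nonneg (by norm_num) (sub_nonneg.mpr ((hA₁.commutatorObservable hA₂).kronecker_le_one
    (hB₁.commutatorObservable hB₂) (commutatorObservable_mul_self_le_one hA₁ hA₂ hA₁u hA₂u)
    (commutatorObservable_mul_self_le_one hB₁ hB₂ hB₁u hB₂u)))

theorem chshOperator_anticomm_one_kronecker_commutatorObservable (hB₁ : B₁ * B₁ = 1)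
    (hB₂ : B₂ * B₂ = 1) :
    chshOperator A₁ A₂ B₁ B₂ * ((1 : Matrix ι ι ℂ) ⊗ₖ commutatorObservable B₁ B₂) +
      ((1 : Matrix ι ι ℂ) ⊗ₖ commutatorObservable B₁ B₂) * chshOperator A₁ A₂ B₁ B₂ = 0 := by
  rw [commutatorObservable, kronecker_smul, mul_smul_comm, smul_mul_assoc, ← smul_add,
    chshOperator_anticomm hB₁ hB₂, smul_zero]

end CHSH

section States

variable {ι : Type*} [Fintype ι]

noncomputable def expectation (ρ : Matrix ι ι ℂ) : Matrix ι ι ℂ →ₗ[ℝ] ℝ :=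
  Complex.reLm ∘ₗ traceLinearMap ι ℝ ℂ ∘ₗ LinearMap.mulLeft ℝ ρ

variable {ρ X Y M N : Matrix ι ι ℂ}

theorem expectation_apply : expectation ρ X = (ρ * X).trace.re := rfl

theorem Matrix.PosSemidef.trace_mul_nonneg (hρ : ρ.PosSemidef) (hX : X.PosSemidef) :
    0 ≤ (ρ * X).trace := by
  classical
  obtain ⟨P, rfl⟩ := CStarAlgebra.nonneg_iff_eq_star_mul_self.mp hρ.nonneg
  rw [Matrix.mul_assoc, trace_mul_comm]
  exact (hX.mul_mul_conjTranspose_same P).trace_nonneg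

theorem expectation_mono (hρ : ρ.PosSemidef) (h : X ≤ Y) : expectation ρ X ≤ expectation ρ Y := by
  rw [← sub_nonneg, ← map_sub, expectation_apply]
  exact (Complex.le_def.mp (hρ.trace_mul_nonneg (le_iff.mp h))).1

theorem expectation_one [DecidableEq ι] (hρ : ρ.trace = 1) : expectation ρ 1 = 1 := by
  rw [expectation_apply, Matrix.mul_one, hρ, Complex.one_re]

theorem Matrix.IsHermitian.im_trace_mul_eq_zero (hρ : ρ.IsHermitian) (hM : M.IsHermitian) :
    (ρ * M).trace.im = 0 := by
  rw [← Complex.conj_eq_iff_im, ← Complex.star_def, ← trace_conjTranspose, conjTranspose_mul,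
    hρ.eq, hM.eq, trace_mul_comm]

theorem Matrix.IsHermitian.norm_trace_mul_eq_abs_expectation (hρ : ρ.IsHermitian)
    (hM : M.IsHermitian) : ‖(ρ * M).trace‖ = |expectation ρ M| := by
  rw [expectation_apply, ← Complex.abs_re_eq_norm.mpr (hρ.im_trace_mul_eq_zero hM)]

theorem sq_expectation_le_expectation_mul_self [DecidableEq ι] (hρ : ρ.PosSemidef)
    (htr : ρ.trace = 1) (hM : M.IsHermitian) :
    expectation ρ M ^ 2 ≤ expectation ρ (M * M) := by
  set r := expectation ρ M
  have hvar : 0 ≤ (M - r • 1) * (M - r • 1) :=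
    (hM.sub (isHermitian_one.smul (IsSelfAdjoint.all r))).isSelfAdjoint.mul_self_nonneg
  have hexpand : (M - r • 1) * (M - r • 1) = M * M - (2 * r) • M + (r ^ 2) • 1 := by
    simp only [sub_mul, mul_sub, smul_mul_assoc, mul_smul_comm, one_mul, mul_one]
    module
  have := expectation_mono hρ hvar
  rw [hexpand, map_zero, map_add, map_sub, map_smul, map_smul, expectation_one htr,
    smul_eq_mul, smul_eq_mul] at this
  nlinarith

end States

section Uncertainty

variable {ι : Type*} [Fintype ι] [DecidableEq ι] {ρ M N : Matrix ι ι ℂ}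

theorem expectation_sq_add_le_of_anticomm (hρ : ρ.PosSemidef) (htr : ρ.trace = 1)
    (hM : M.IsHermitian) (hN : N.IsHermitian) (hMN : M * N + N * M = 0) {a b : ℝ}
    (ha : M * M ≤ a • 1) (hb : N * N ≤ b • 1) :
    b * expectation ρ M ^ 2 + a * expectation ρ N ^ 2 ≤ a * b := by
  set x := expectation ρ M
  set y := expectation ρ N
  have hline : ∀ s t : ℝ, (s * x + t * y) ^ 2 ≤ s ^ 2 * a + t ^ 2 * b := by
    intro s t
    set K := s • M + t • N
    have hK : K.IsHermitian := (hM.smul (.all s)).add (hN.smul (.all t))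
    have hKK : K * K = s ^ 2 • (M * M) + t ^ 2 • (N * N) + (s * t) • (M * N + N * M) := by
      simp only [K, add_mul, mul_add, smul_mul_smul_comm]
      module
    have hle : K * K ≤ (s ^ 2 * a + t ^ 2 * b) • 1 := by
      rw [hKK, hMN, smul_zero, add_zero, add_smul, mul_smul, mul_smul]
      exact add_le_add (smul_le_smul_of_nonneg_left ha (sq_nonneg s))
        (smul_le_smul_of_nonneg_left hb (sq_nonneg t))
    calc (s * x + t * y) ^ 2 = expectation ρ K ^ 2 := by
          rw [map_add, map_smul, map_smul, smul_eq_mul, smul_eq_mul]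
      _ ≤ expectation ρ (K * K) := sq_expectation_le_expectation_mul_self hρ htr hK
      _ ≤ expectation ρ ((s ^ 2 * a + t ^ 2 * b) • 1) := expectation_mono hρ hle
      _ = s ^ 2 * a + t ^ 2 * b := by rw [map_smul, expectation_one htr, smul_eq_mul, mul_one]
  have ha0 : 0 ≤ a := by nlinarith [hline 1 0]
  have hb0 : 0 ≤ b := by nlinarith [hline 0 1]
  -- `(s, t) = (b x, a y)` is the optimal direction
  nlinarith [hline (b * x) (a * y), mul_nonneg ha0 hb0, mul_nonneg hb0 (sq_nonneg x),
    mul_nonneg ha0 (sq_nonneg y)]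

end Uncertainty

/-- Local analogue of Tsirelson's bound:
⟨𝓑⟩ ≤ 2√(2 − |⟨(i/2)[B₁,B₂]⟩|²). -/
theorem chsh_local_commutator_bound {m n : ℕ}
    (A₁ A₂ : Matrix (Fin m) (Fin m) ℂ) (B₁ B₂ : Matrix (Fin n) (Fin n) ℂ)
    (hA₁ : A₁.IsHermitian) (hA₂ : A₂.IsHermitian)
    (hB₁ : B₁.IsHermitian) (hB₂ : B₂.IsHermitian)
    (hA₁u : A₁ * A₁ = 1) (hA₂u : A₂ * A₂ = 1)
    (hB₁u : B₁ * B₁ = 1) (hB₂u : B₂ * B₂ = 1)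
    (ρ : Matrix (Fin m × Fin n) (Fin m × Fin n) ℂ)
    (hρ : ρ.PosSemidef) (hρtr : ρ.trace = 1) :
    ((ρ * (A₁ ⊗ₖ (B₁ + B₂) + A₂ ⊗ₖ (B₁ - B₂))).trace).re ≤
      2 * Real.sqrt (2 -
        ‖((ρ * ((1 : Matrix (Fin m) (Fin m) ℂ) ⊗ₖ
          ((Complex.I / 2) • (B₁ * B₂ - B₂ * B₁)))).trace)‖ ^ 2) := by
  set C := (1 : Matrix (Fin m) (Fin m) ℂ) ⊗ₖ commutatorObservable B₁ B₂
  have hC : C.IsHermitian := isHermitian_one.kronecker (hB₁.commutatorObservable hB₂)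
  have hbound := expectation_sq_add_le_of_anticomm (a := 8) (b := 1) hρ hρtr
    (hA₁.chshOperator hA₂ hB₁ hB₂) hC
    (chshOperator_anticomm_one_kronecker_commutatorObservable hB₁u hB₂u)
    (by simpa [ofNat_smul_eq_nsmul] using
          chshOperator_mul_self_le_eight hA₁ hA₂ hB₁ hB₂ hA₁u hA₂u hB₁u hB₂u)
    (by simpa using
          one_kronecker_mul_self_le_one (commutatorObservable_mul_self_le_one hB₁ hB₂ hB₁u hB₂u))
  change expectation ρ (chshOperator A₁ A₂ B₁ B₂) ≤ 2 * Real.sqrt (2 - ‖(ρ * C).trace‖ ^ 2)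
  rw [hρ.isHermitian.norm_trace_mul_eq_abs_expectation hC, sq_abs]
  have hhalf : expectation ρ (chshOperator A₁ A₂ B₁ B₂) / 2 ≤ Real.sqrt (2 - expectation ρ C ^ 2) :=
    (le_abs_self _).trans (Real.abs_le_sqrt (by nlinarith))
  linarith
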